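/- arXiv:1906.07846 — 2 statements merged into one kernel-verified Lean document; each statement's English description precedes it below -/
import Mathlib

section
/- Let A and B be n×n complex matrices satisfying −B†A + A†B = 0 and A†A + B†B > 0 (positive definite). Then for every nonzero real k the matrix B − ik A is invertible. -/
open Matrix
open scoped ComplexOrder
theorem jost_matrix_free_invertible (n : ℕ) (A B : Matrix (Fin n) (Fin n) ℂ)
    (h1 : -Bᴴ * A + Aᴴ * B = 0) (h2 : (Aᴴ * A + Bᴴ * B).PosDef)
    (k : ℝ) (hk : k ≠ 0) :
    IsUnit (B - (Complex.I * k) • A) := by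
  set c : ℂ := Complex.I * k with hcdef
  set M : Matrix (Fin n) (Fin n) ℂ := B - c • A with hMdef
  have hAB : Bᴴ * A = Aᴴ * B := by
    rw [neg_mul] at h1; exact neg_add_eq_zero.mp h1
  have hc : star c = -c := by
    simp [hcdef, Complex.conj_ofReal]
  have hc2 : -c * c = ((k : ℂ))^2 := by
    simp only [hcdef]
    rw [show -(Complex.I * (k:ℂ)) * (Complex.I * k) = -(Complex.I * Complex.I) * (k * k) by ring,
      Complex.I_mul_I]
    ring
  have hM : Mᴴ * M = Bᴴ * B + ((k : ℂ))^2 • (Aᴴ * A) := by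
    rw [hMdef, conjTranspose_sub, conjTranspose_smul, hc, sub_mul, mul_sub, mul_sub,
      smul_mul_assoc, smul_mul_assoc, Matrix.mul_smul, Matrix.mul_smul, smul_smul, hc2, hAB]
    simp only [hcdef]
    module
  have hpos : (Mᴴ * M).PosDef := by
    refine PosDef.of_dotProduct_mulVec_pos (isHermitian_conjTranspose_mul_self M) fun x hx => ?_
    have hqA := (posSemidef_conjTranspose_mul_self A).dotProduct_mulVec_nonneg x
    have hqB := (posSemidef_conjTranspose_mul_self B).dotProduct_mulVec_nonneg x
    have hsum := h2.dotProduct_mulVec_pos hx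
    rw [Matrix.add_mulVec, dotProduct_add] at hsum
    rw [hM, Matrix.add_mulVec, dotProduct_add, Matrix.smul_mulVec, dotProduct_smul]
    have hk2 : (0 : ℂ) < ((k : ℂ))^2 := by
      rw [show ((k:ℂ))^2 = ((k^2 : ℝ) : ℂ) by push_cast; ring]
      rw [Complex.zero_lt_real]
      positivity
    rcases hqA.lt_or_eq with ha | ha
    · exact add_pos_of_nonneg_of_pos hqB (smul_pos hk2 ha)
    · have hb : 0 < star x ⬝ᵥ (Bᴴ * B) *ᵥ x := by
        rw [← ha, zero_add] at hsum; exact hsum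
      exact add_pos_of_pos_of_nonneg hb (smul_nonneg hk2.le hqA)
  have hdet : IsUnit (Mᴴ * M) := hpos.isUnit
  rw [Matrix.isUnit_iff_isUnit_det] at hdet ⊢
  rw [det_mul] at hdet
  exact isUnit_of_mul_isUnit_right hdet
end

section
/- Let A, B be n×n complex matrices with −B†A + A†B = 0 and A†A + B†B > 0, and suppose B − ikA is invertible for a given nonzero real k. Then the matrix S₀(k) := −(B + ikA)(B − ikA)^{-1} is unitary and satisfies S₀(−k) = S₀(k)† = S₀(k)^{-1}. -/
/-!
Writing `C = B - ikA` and `D = B + ikA`, the symmetry `B†A = A†B` and `(ik)* = -ik` give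
`D†D = C†C`, which says exactly that `D C⁻¹` is an isometry, hence unitary. Replacing `k` by
`-k` swaps `C` and `D`, so `S₀(-k) = -C D⁻¹ = (-D C⁻¹)⁻¹ = S₀(k)⁻¹ = S₀(k)†`.
-/

open Matrix
open scoped ComplexOrder

namespace Matrix

variable {n R : Type*} [Fintype n] [DecidableEq n] [CommRing R]

theorem nonsing_inv_neg (A : Matrix n n R) : (-A)⁻¹ = -A⁻¹ := by
  by_cases hA : IsUnit A.det
  · exact inv_eq_left_inv (by rw [neg_mul_neg, nonsing_inv_mul A hA])
  · have hnegA : ¬IsUnit (-A).det := by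
      rwa [det_neg, (isUnit_neg_one.pow _).mul_left_iff]
    rw [nonsing_inv_apply_not_isUnit A hA, nonsing_inv_apply_not_isUnit _ hnegA, neg_zero]

variable [StarRing R]

theorem conjTranspose_mul_self_add_smul_eq_sub_smul {A B : Matrix n n R} {c : R}
    (hAB : Bᴴ * A = Aᴴ * B) (hc : star c = -c) :
    (B + c • A)ᴴ * (B + c • A) = (B - c • A)ᴴ * (B - c • A) := by
  simp only [conjTranspose_add, conjTranspose_sub, conjTranspose_smul, hc, add_mul, sub_mul,
    mul_add, mul_sub, smul_mul_assoc, mul_smul_comm, hAB]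
  module

theorem mul_nonsing_inv_mem_unitaryGroup_of_conjTranspose_mul_self_eq {C D : Matrix n n R}
    (hDC : Dᴴ * D = Cᴴ * C) (hC : IsUnit C) : D * C⁻¹ ∈ unitaryGroup n R := by
  have hC' : IsUnit C.det := (isUnit_iff_isUnit_det C).mp hC
  rw [mem_unitaryGroup_iff', star_eq_conjTranspose, conjTranspose_mul]
  calc C⁻¹ᴴ * Dᴴ * (D * C⁻¹) = C⁻¹ᴴ * (Dᴴ * D) * C⁻¹ := by simp only [Matrix.mul_assoc]
    _ = (C * C⁻¹)ᴴ * (C * C⁻¹) := by simp only [hDC, conjTranspose_mul, Matrix.mul_assoc]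
    _ = 1 := by rw [mul_nonsing_inv C hC', conjTranspose_one, Matrix.mul_one]

theorem conjTranspose_eq_nonsing_inv_of_mem_unitaryGroup {U : Matrix n n R}
    (hU : U ∈ unitaryGroup n R) : Uᴴ = U⁻¹ :=
  (inv_eq_left_inv (mem_unitaryGroup_iff'.mp hU)).symm

end Matrix

theorem free_scattering_matrix_unitary_general (n : ℕ) (A B : Matrix (Fin n) (Fin n) ℂ)
    (h1 : -Bᴴ * A + Aᴴ * B = 0)
    (k : ℝ) (hinv : IsUnit (B - (Complex.I * k) • A)) :
    (-(B + (Complex.I * k) • A) * (B - (Complex.I * k) • A)⁻¹) ∈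
      Matrix.unitaryGroup (Fin n) ℂ ∧
    -(B + (Complex.I * (-k : ℝ)) • A) * (B - (Complex.I * (-k : ℝ)) • A)⁻¹ =
      (-(B + (Complex.I * k) • A) * (B - (Complex.I * k) • A)⁻¹)ᴴ ∧
    (-(B + (Complex.I * k) • A) * (B - (Complex.I * k) • A)⁻¹)ᴴ =
      (-(B + (Complex.I * k) • A) * (B - (Complex.I * k) • A)⁻¹)⁻¹ := by
  set c : ℂ := Complex.I * k
  have hAB : Bᴴ * A = Aᴴ * B := by rwa [neg_mul, neg_add_eq_zero] at h1
  have hc : star c = -c := by simp [c]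
  have hDC : (-(B + c • A))ᴴ * -(B + c • A) = (B - c • A)ᴴ * (B - c • A) := by
    rw [conjTranspose_neg, neg_mul_neg, conjTranspose_mul_self_add_smul_eq_sub_smul hAB hc]
  have hU := mul_nonsing_inv_mem_unitaryGroup_of_conjTranspose_mul_self_eq hDC hinv
  have hstar := conjTranspose_eq_nonsing_inv_of_mem_unitaryGroup hU
  refine ⟨hU, ?_, hstar⟩
  have hneg : Complex.I * ((-k : ℝ) : ℂ) = -c := by push_cast; ring
  have hflip : -(B + (Complex.I * (-k : ℝ)) • A) * (B - (Complex.I * (-k : ℝ)) • A)⁻¹ =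
      -(B - c • A) * (B + c • A)⁻¹ := by
    rw [hneg, neg_smul, ← sub_eq_add_neg, sub_neg_eq_add]
  rw [hflip, hstar, Matrix.mul_inv_rev,
    nonsing_inv_nonsing_inv _ ((isUnit_iff_isUnit_det _).mp hinv), nonsing_inv_neg,
    Matrix.mul_neg, Matrix.neg_mul]

theorem free_scattering_matrix_unitary (n : ℕ) (A B : Matrix (Fin n) (Fin n) ℂ)
    (h1 : -Bᴴ * A + Aᴴ * B = 0) (h2 : (Aᴴ * A + Bᴴ * B).PosDef)
    (k : ℝ) (hk : k ≠ 0) (hinv : IsUnit (B - (Complex.I * k) • A)) :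
    (-(B + (Complex.I * k) • A) * (B - (Complex.I * k) • A)⁻¹) ∈
      Matrix.unitaryGroup (Fin n) ℂ ∧
    -(B + (Complex.I * (-k : ℝ)) • A) * (B - (Complex.I * (-k : ℝ)) • A)⁻¹ =
      (-(B + (Complex.I * k) • A) * (B - (Complex.I * k) • A)⁻¹)ᴴ ∧
    (-(B + (Complex.I * k) • A) * (B - (Complex.I * k) • A)⁻¹)ᴴ =
      (-(B + (Complex.I * k) • A) * (B - (Complex.I * k) • A)⁻¹)⁻¹ :=
  free_scattering_matrix_unitary_general n A B h1 k hinv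
end
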